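/- Let t ≥ 2 be an integer, let G be a finite simple graph, and let G_{t'} be the graph obtained from G by replacing each edge (u,w) with two internally-disjoint paths from u to w: one with t internal vertices and one with t+1 internal vertices. Then G contains a triangle if and only if G_{t'} contains a cycle of length 3(t+1)+1. -/

import Mathlib

variable {V : Type*} [LinearOrder V]

/-- The smaller endpoint of an (unordered) edge. -/
def sMin (e : Sym2 V) : V := Sym2.lift ⟨fun a b => min a b, fun a b => min_comm a b⟩ e

/-- The larger endpoint of an (unordered) edge. -/
def sMax (e : Sym2 V) : V := Sym2.lift ⟨fun a b => max a b, fun a b => max_comm a b⟩ e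

/-- The graph `G_{t'}` obtained from `G` by replacing each edge `e = (u,w)` by two
internally disjoint paths from `u` to `w`: one with `t` internal vertices
(indexed by `Fin t`) and one with `t+1` internal vertices (indexed by `Fin (t+1)`). -/
def DoubleSubdiv (G : SimpleGraph V) (t : ℕ) :
    SimpleGraph (V ⊕ (G.edgeSet × (Fin t ⊕ Fin (t + 1)))) :=
  SimpleGraph.fromRel fun a b =>
    match a, b with
    | Sum.inl u, Sum.inr (e, Sum.inl i) =>
        (i.val = 0 ∧ u = sMin (e : Sym2 V)) ∨ (i.val = t - 1 ∧ u = sMax (e : Sym2 V))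
    | Sum.inl u, Sum.inr (e, Sum.inr j) =>
        (j.val = 0 ∧ u = sMin (e : Sym2 V)) ∨ (j.val = t ∧ u = sMax (e : Sym2 V))
    | Sum.inr (e, Sum.inl i), Sum.inr (e', Sum.inl i') =>
        (e : Sym2 V) = (e' : Sym2 V) ∧ i'.val = i.val + 1
    | Sum.inr (e, Sum.inr j), Sum.inr (e', Sum.inr j') =>
        (e : Sym2 V) = (e' : Sym2 V) ∧ j'.val = j.val + 1
    | _, _ => False

/-!
Every internal vertex of a subdivision path has exactly two neighbours, so a cycle, which never
backtracks, that enters such a path must run through it to the other end. Hence a cycle of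
`G_{t'}` passes through branch vertices of `G`, consecutive ones adjacent in `G`, joined by paths
of length `t + 1` or `t + 2`. With `k` such paths, `k (t + 1) ≤ 3 (t + 1) + 1 ≤ k (t + 2)` forces
`k = 3` (as `t ≥ 1`), and the three branch vertices form a triangle. Conversely, for a triangle
`a < b < c` the short paths of `ab` and `bc` followed by the long path of `ac` form a cycle of
length `(t + 1) + (t + 1) + (t + 2)`.
-/

open SimpleGraph Function

@[simp] lemma sMin_mk (a b : V) : sMin s(a, b) = min a b := rfl

@[simp] lemma sMax_mk (a b : V) : sMax s(a, b) = max a b := rfl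

lemma adj_sMin_sMax {G : SimpleGraph V} (e : G.edgeSet) :
    G.Adj (sMin (e : Sym2 V)) (sMax (e : Sym2 V)) := by
  obtain ⟨e, he⟩ := e
  induction e with
  | _ a b =>
    rw [mem_edgeSet] at he
    rcases le_total a b with h | h
    · simpa [h] using he
    · simpa [h] using he.symm

namespace SimpleGraph

variable {W : Type*}

def IsCorridor (H : SimpleGraph W) (Q : ℕ → W) (L : ℕ) : Prop :=
  ∀ m, 1 ≤ m → m ≤ L → ∀ x, H.Adj x (Q m) → x = Q (m - 1) ∨ x = Q (m + 1)

variable {H : SimpleGraph W}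

lemma IsCorridor.reverse {Q : ℕ → W} {L : ℕ} (hQ : H.IsCorridor Q L) :
    H.IsCorridor (fun m ↦ Q (L + 1 - m)) L := by
  intro m hm₁ hmL x hx
  rcases hQ (L + 1 - m) (by omega) (by omega) x hx with h | h
  · exact Or.inr (h.trans (congrArg Q (by omega)))
  · exact Or.inl (h.trans (congrArg Q (by omega)))

lemma IsCorridor.eq_of_nonBacktracking {Q f : ℕ → W} {L k : ℕ} (hQ : H.IsCorridor Q L)
    (hadj : ∀ m, H.Adj (f m) (f (m + 1))) (hnb : ∀ m, f (m + 2) ≠ f m)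
    (h₀ : f 0 = Q k) (h₁ : f 1 = Q (k + 1)) :
    ∀ m, k + m ≤ L + 1 → f m = Q (k + m) := by
  suffices h : ∀ m, k + m + 1 ≤ L + 1 → f m = Q (k + m) ∧ f (m + 1) = Q (k + m + 1) by
    intro m hm
    cases m with
    | zero => exact h₀
    | succ m => exact (h m (by omega)).2
  intro m
  induction m with
  | zero => exact fun _ ↦ ⟨h₀, h₁⟩
  | succ m ih =>
    intro hm
    obtain ⟨hfm, hfm₁⟩ := ih (by omega)
    refine ⟨hfm₁, ?_⟩
    have hadj' : H.Adj (f (m + 2)) (Q (k + m + 1)) := hfm₁ ▸ (hadj (m + 1)).symm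
    rcases hQ (k + m + 1) (by omega) (by omega) _ hadj' with h | h
    · exact absurd (h.trans hfm.symm) (hnb m)
    · exact h

lemma cycleGraph_isContained_of_injOn {n : ℕ} {s : ℕ → W}
    (hadj : ∀ m < n, H.Adj (s m) (s (m + 1))) (hclosed : s n = s 0)
    (hinj : Set.InjOn s (Set.Iio n)) : cycleGraph n ⊑ H := by
  refine ⟨⟨⟨fun i ↦ s i, fun {i j} hij ↦ ?_⟩, fun i j hij ↦ Fin.ext (hinj i.2 j.2 hij)⟩⟩
  have step : ∀ i j : Fin n, (i - j).val = 1 → H.Adj (s i) (s j) := by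
    intro i j h
    rcases le_or_gt j i with hji | hij
    · rw [Fin.sub_val_of_le hji] at h
      rw [show (i : ℕ) = j + 1 by omega]
      exact (hadj j (by omega)).symm
    · rw [Fin.coe_sub_iff_lt.2 hij] at h
      have hj := hadj j j.2
      rw [show (j : ℕ) + 1 = n by omega, hclosed, ← show (i : ℕ) = 0 by omega] at hj
      exact hj.symm
  rcases cycleGraph_adj'.1 hij with h | h
  · exact step i j h
  · exact (step j i h).symm

open Fin.NatCast in
lemma exists_periodic_of_cycleGraph_isContained {n : ℕ} (hn : 3 ≤ n) (h : cycleGraph n ⊑ H) :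
    ∃ s : ℕ → W, Periodic s n ∧ (∀ m, H.Adj (s m) (s (m + 1))) ∧ ∀ m, s (m + 2) ≠ s m := by
  obtain ⟨φ⟩ := h
  have : NeZero n := ⟨by omega⟩
  refine ⟨fun m : ℕ ↦ φ.toHom (m : Fin n), fun m ↦ by simp, fun m ↦ φ.toHom.map_adj ?_,
    fun m ↦ φ.injective.ne ?_⟩
  · rw [cycleGraph_adj']
    right
    rw [Nat.cast_succ, add_sub_cancel_left, Fin.val_one', Nat.mod_eq_of_lt (by omega)]
  · rw [Ne, Fin.ext_iff, Fin.val_natCast, Fin.val_natCast]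
    intro h
    have h2 : 2 ≡ 0 [MOD n] := Nat.ModEq.add_left_cancel' m h
    rw [Nat.ModEq, Nat.mod_eq_of_lt (by omega), Nat.zero_mod] at h2
    omega

lemma exists_sorted_triangle {G : SimpleGraph V} {a b c : V} (hab : G.Adj a b)
    (hbc : G.Adj b c) (hca : G.Adj c a) :
    ∃ x y z, x < y ∧ y < z ∧ G.Adj x y ∧ G.Adj y z ∧ G.Adj x z := by
  rcases hab.ne.lt_or_gt with h₁ | h₁ <;> rcases hbc.ne.lt_or_gt with h₂ | h₂ <;>
    rcases hca.ne.lt_or_gt with h₃ | h₃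
  · exact absurd (h₁.trans (h₂.trans h₃)) (lt_irrefl a)
  · exact ⟨a, b, c, h₁, h₂, hab, hbc, hca.symm⟩
  · exact ⟨c, a, b, h₃, h₁, hca, hab, hbc.symm⟩
  · exact ⟨a, c, b, h₃, h₂, hca.symm, hbc.symm, hab⟩
  · exact ⟨b, c, a, h₂, h₃, hbc, hca, hab.symm⟩
  · exact ⟨b, a, c, h₁, h₃, hab.symm, hca.symm, hbc⟩
  · exact ⟨c, b, a, h₂, h₁, hbc.symm, hab.symm, hca⟩
  · exact absurd (h₃.trans (h₂.trans h₁)) (lt_irrefl a)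

end SimpleGraph

namespace DoubleSubdiv

variable {G : SimpleGraph V} {t : ℕ}

@[simp] lemma not_adj_inl_inl {u v : V} : ¬ (DoubleSubdiv G t).Adj (.inl u) (.inl v) := by
  simp [DoubleSubdiv]

@[simp] lemma adj_inl_short {u : V} {e : G.edgeSet} {i : Fin t} :
    (DoubleSubdiv G t).Adj (.inl u) (.inr (e, .inl i)) ↔
      (i.val = 0 ∧ u = sMin (e : Sym2 V)) ∨ (i.val = t - 1 ∧ u = sMax (e : Sym2 V)) := by
  simp [DoubleSubdiv]

@[simp] lemma adj_inl_long {u : V} {e : G.edgeSet} {j : Fin (t + 1)} :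
    (DoubleSubdiv G t).Adj (.inl u) (.inr (e, .inr j)) ↔
      (j.val = 0 ∧ u = sMin (e : Sym2 V)) ∨ (j.val = t ∧ u = sMax (e : Sym2 V)) := by
  simp [DoubleSubdiv]

@[simp] lemma adj_short_short {e e' : G.edgeSet} {i i' : Fin t} :
    (DoubleSubdiv G t).Adj (.inr (e, .inl i)) (.inr (e', .inl i')) ↔
      e = e' ∧ (i'.val = i.val + 1 ∨ i.val = i'.val + 1) := by
  simp only [DoubleSubdiv, fromRel_adj, ne_eq, Sum.inr.injEq, Prod.mk.injEq, Sum.inl.injEq,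
    Fin.ext_iff]
  grind

@[simp] lemma adj_long_long {e e' : G.edgeSet} {j j' : Fin (t + 1)} :
    (DoubleSubdiv G t).Adj (.inr (e, .inr j)) (.inr (e', .inr j')) ↔
      e = e' ∧ (j'.val = j.val + 1 ∨ j.val = j'.val + 1) := by
  simp only [DoubleSubdiv, fromRel_adj, ne_eq, Sum.inr.injEq, Prod.mk.injEq, Fin.ext_iff]
  grind

@[simp] lemma not_adj_short_long {e e' : G.edgeSet} {i : Fin t} {j : Fin (t + 1)} :
    ¬ (DoubleSubdiv G t).Adj (.inr (e, .inl i)) (.inr (e', .inr j)) := by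
  simp [DoubleSubdiv]

@[simp] lemma not_adj_long_short {e e' : G.edgeSet} {i : Fin t} {j : Fin (t + 1)} :
    ¬ (DoubleSubdiv G t).Adj (.inr (e', .inr j)) (.inr (e, .inl i)) := by
  simp [DoubleSubdiv]

variable (t) in
def shortThread (e : G.edgeSet) (m : ℕ) : V ⊕ (G.edgeSet × (Fin t ⊕ Fin (t + 1))) :=
  if h₀ : m = 0 then .inl (sMin (e : Sym2 V))
  else if h : m ≤ t then .inr (e, .inl ⟨m - 1, by omega⟩) else .inl (sMax (e : Sym2 V))

variable (t) in
def longThread (e : G.edgeSet) (m : ℕ) : V ⊕ (G.edgeSet × (Fin t ⊕ Fin (t + 1))) :=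
  if h₀ : m = 0 then .inl (sMin (e : Sym2 V))
  else if h : m ≤ t + 1 then .inr (e, .inr ⟨m - 1, by omega⟩) else .inl (sMax (e : Sym2 V))

section Values

variable (e : G.edgeSet) {m : ℕ}

@[simp] lemma shortThread_zero : shortThread t e 0 = .inl (sMin (e : Sym2 V)) := rfl

lemma shortThread_of_le (h₁ : 1 ≤ m) (h₂ : m ≤ t) :
    shortThread t e m = .inr (e, .inl ⟨m - 1, by omega⟩) := by
  simp [shortThread, h₂, show m ≠ 0 by omega]

lemma shortThread_val_add_one (i : Fin t) : shortThread t e (i + 1) = .inr (e, .inl i) :=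
  shortThread_of_le e (by omega) i.2

lemma shortThread_of_lt (h : t < m) : shortThread t e m = .inl (sMax (e : Sym2 V)) := by
  simp [shortThread, show m ≠ 0 by omega, show ¬ m ≤ t by omega]

@[simp] lemma longThread_zero : longThread t e 0 = .inl (sMin (e : Sym2 V)) := rfl

lemma longThread_of_le (h₁ : 1 ≤ m) (h₂ : m ≤ t + 1) :
    longThread t e m = .inr (e, .inr ⟨m - 1, by omega⟩) := by
  simp [longThread, h₂, show m ≠ 0 by omega]

lemma longThread_val_add_one (j : Fin (t + 1)) : longThread t e (j + 1) = .inr (e, .inr j) :=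
  longThread_of_le e (by omega) j.2

lemma longThread_of_lt (h : t + 1 < m) : longThread t e m = .inl (sMax (e : Sym2 V)) := by
  simp [longThread, show m ≠ 0 by omega, show ¬ m ≤ t + 1 by omega]

end Values

lemma isCorridor_shortThread (e : G.edgeSet) :
    (DoubleSubdiv G t).IsCorridor (shortThread t e) t := by
  intro m hm₁ hmt x hx
  rw [shortThread_of_le e hm₁ hmt] at hx
  rcases x with u | ⟨e', i | j⟩
  · rw [adj_inl_short, Fin.val_mk] at hx
    obtain ⟨h, rfl⟩ | ⟨h, rfl⟩ := hx
    · exact Or.inl (by rw [show m - 1 = 0 by omega, shortThread_zero])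
    · exact Or.inr (by rw [shortThread_of_lt e (by omega)])
  · rw [adj_comm, adj_short_short] at hx
    obtain ⟨rfl, h | h⟩ := hx <;> simp only at h
    · exact Or.inr (by rw [show m + 1 = i + 1 by omega, shortThread_val_add_one])
    · exact Or.inl (by rw [show m - 1 = i + 1 by omega, shortThread_val_add_one])
  · exact absurd hx not_adj_long_short

lemma isCorridor_longThread (e : G.edgeSet) :
    (DoubleSubdiv G t).IsCorridor (longThread t e) (t + 1) := by
  intro m hm₁ hmt x hx
  rw [longThread_of_le e hm₁ hmt] at hx
  rcases x with u | ⟨e', i | j⟩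
  · rw [adj_inl_long, Fin.val_mk] at hx
    obtain ⟨h, rfl⟩ | ⟨h, rfl⟩ := hx
    · exact Or.inl (by rw [show m - 1 = 0 by omega, longThread_zero])
    · exact Or.inr (by rw [longThread_of_lt e (by omega)])
  · exact absurd hx not_adj_short_long
  · rw [adj_comm, adj_long_long] at hx
    obtain ⟨rfl, h | h⟩ := hx <;> simp only at h
    · exact Or.inr (by rw [show m + 1 = j + 1 by omega, longThread_val_add_one])
    · exact Or.inl (by rw [show m - 1 = j + 1 by omega, longThread_val_add_one])

variable (G t) in
/-- What the cycle argument uses about a subdivision path `Q 0, …, Q (L + 1)` of an edge of `G`,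
traversed in either direction. -/
structure IsThread (Q : ℕ → V ⊕ (G.edgeSet × (Fin t ⊕ Fin (t + 1)))) (L : ℕ) : Prop where
  length_eq : L = t ∨ L = t + 1
  adj_ends : ∃ a b, Q 0 = .inl a ∧ Q (L + 1) = .inl b ∧ G.Adj a b
  interior_ne_inl : ∀ m, 1 ≤ m → m ≤ L → ∀ a, Q m ≠ .inl a
  isCorridor : (DoubleSubdiv G t).IsCorridor Q L

lemma IsThread.reverse {Q : ℕ → V ⊕ (G.edgeSet × (Fin t ⊕ Fin (t + 1)))} {L : ℕ}
    (hQ : IsThread G t Q L) : IsThread G t (fun m ↦ Q (L + 1 - m)) L where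
  length_eq := hQ.length_eq
  adj_ends := by
    obtain ⟨a, b, ha, hb, hab⟩ := hQ.adj_ends
    exact ⟨b, a, by simpa using hb, by simpa using ha, hab.symm⟩
  interior_ne_inl m hm₁ hmL := hQ.interior_ne_inl _ (by omega) (by omega)
  isCorridor := hQ.isCorridor.reverse

lemma isThread_shortThread (e : G.edgeSet) : IsThread G t (shortThread t e) t where
  length_eq := .inl rfl
  adj_ends := ⟨_, _, rfl, shortThread_of_lt e (by omega), adj_sMin_sMax e⟩
  interior_ne_inl m hm₁ hmt a := by simp [shortThread_of_le e hm₁ hmt]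
  isCorridor := isCorridor_shortThread e

lemma isThread_longThread (e : G.edgeSet) : IsThread G t (longThread t e) (t + 1) where
  length_eq := .inr rfl
  adj_ends := ⟨_, _, rfl, longThread_of_lt e (by omega), adj_sMin_sMax e⟩
  interior_ne_inl m hm₁ hmt a := by simp [longThread_of_le e hm₁ hmt]
  isCorridor := isCorridor_longThread e

lemma exists_isThread_eq_inr (e : G.edgeSet) (p : Fin t ⊕ Fin (t + 1)) :
    ∃ Q L k, IsThread G t Q L ∧ 1 ≤ k ∧ k ≤ L ∧ Q k = .inr (e, p) := by
  rcases p with i | j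
  · exact ⟨_, _, i + 1, isThread_shortThread e, by omega, i.2, shortThread_val_add_one e i⟩
  · exact ⟨_, _, j + 1, isThread_longThread e, by omega, j.2, longThread_val_add_one e j⟩

variable (G t) in
def ThreadStep (x y : V ⊕ (G.edgeSet × (Fin t ⊕ Fin (t + 1)))) : Prop :=
  ∃ Q L k, IsThread G t Q L ∧ k ≤ L ∧ Q k = x ∧ Q (k + 1) = y

lemma ThreadStep.symm {x y} (h : ThreadStep G t x y) : ThreadStep G t y x := by
  obtain ⟨Q, L, k, hQ, hkL, hx, hy⟩ := h
  refine ⟨_, L, L - k, hQ.reverse, by omega, ?_, ?_⟩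
  · rw [← hy]; congr 1; omega
  · rw [← hx]; congr 1; omega

lemma IsThread.threadStep_of_adj {Q : ℕ → V ⊕ (G.edgeSet × (Fin t ⊕ Fin (t + 1)))} {L k : ℕ}
    (hQ : IsThread G t Q L) (hk₁ : 1 ≤ k) (hkL : k ≤ L) {x} (h : (DoubleSubdiv G t).Adj x (Q k)) :
    ThreadStep G t x (Q k) := by
  rcases hQ.isCorridor k hk₁ hkL x h with rfl | rfl
  · exact ⟨Q, L, k - 1, hQ, by omega, rfl, by rw [Nat.sub_add_cancel hk₁]⟩
  · exact ThreadStep.symm ⟨Q, L, k, hQ, hkL, rfl, rfl⟩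

lemma threadStep_of_adj {x y} (h : (DoubleSubdiv G t).Adj x y) : ThreadStep G t x y := by
  rcases y with b | ⟨e, p⟩
  · rcases x with a | ⟨e, p⟩
    · exact absurd h not_adj_inl_inl
    · obtain ⟨Q, L, k, hQ, hk₁, hkL, hk⟩ := exists_isThread_eq_inr e p
      exact hk ▸ (hQ.threadStep_of_adj hk₁ hkL (hk ▸ h.symm)).symm
  · obtain ⟨Q, L, k, hQ, hk₁, hkL, hk⟩ := exists_isThread_eq_inr e p
    exact hk ▸ hQ.threadStep_of_adj hk₁ hkL (hk ▸ h)

section NonBacktracking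

variable {s : ℕ → V ⊕ (G.edgeSet × (Fin t ⊕ Fin (t + 1)))}

lemma exists_inl_of_nonBacktracking (hadj : ∀ m, (DoubleSubdiv G t).Adj (s m) (s (m + 1)))
    (hnb : ∀ m, s (m + 2) ≠ s m) : ∃ i a, s i = .inl a := by
  obtain ⟨Q, L, k, hQ, hkL, h₀, h₁⟩ := threadStep_of_adj (hadj 0)
  obtain ⟨-, b, -, hb, -⟩ := hQ.adj_ends
  refine ⟨L + 1 - k, b, ?_⟩
  rw [hQ.isCorridor.eq_of_nonBacktracking hadj hnb h₀.symm h₁.symm _ (by omega), ← hb]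
  congr 1; omega

lemma exists_next_inl_of_nonBacktracking (hadj : ∀ m, (DoubleSubdiv G t).Adj (s m) (s (m + 1)))
    (hnb : ∀ m, s (m + 2) ≠ s m) {i : ℕ} {a : V} (ha : s i = .inl a) :
    ∃ d b, (d = t + 1 ∨ d = t + 2) ∧ s (i + d) = .inl b ∧ G.Adj a b ∧
      ∀ m, 0 < m → m < d → ∀ v, s (i + m) ≠ .inl v := by
  obtain ⟨Q, L, k, hQ, hkL, h₀, h₁⟩ := threadStep_of_adj (hadj i)
  obtain rfl : k = 0 := by
    by_contra hk
    exact hQ.interior_ne_inl k (by omega) hkL a (h₀.trans ha)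
  obtain ⟨a', b, ha', hb, hab⟩ := hQ.adj_ends
  obtain rfl : a' = a := Sum.inl_injective (ha'.symm.trans (h₀.trans ha))
  have hrun := hQ.isCorridor.eq_of_nonBacktracking (f := fun m ↦ s (i + m))
    (fun m ↦ hadj (i + m)) (fun m ↦ hnb (i + m)) h₀.symm h₁.symm
  refine ⟨L + 1, b, by rcases hQ.length_eq with rfl | rfl <;> omega, ?_, hab, fun m hm₀ hmL v ↦ ?_⟩
  · simpa [hb] using hrun (L + 1) (by omega)
  · simpa [hrun m (by omega)] using hQ.interior_ne_inl m hm₀ (by omega) v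

lemma exists_triangle_of_periodic (ht : 1 ≤ t) (hper : Periodic s (3 * (t + 1) + 1))
    (hadj : ∀ m, (DoubleSubdiv G t).Adj (s m) (s (m + 1))) (hnb : ∀ m, s (m + 2) ≠ s m) :
    ∃ a b c : V, G.Adj a b ∧ G.Adj b c ∧ G.Adj c a := by
  obtain ⟨i, a, ha⟩ := exists_inl_of_nonBacktracking hadj hnb
  obtain ⟨d₁, b, hd₁, hb, hab, -⟩ := exists_next_inl_of_nonBacktracking hadj hnb ha
  obtain ⟨d₂, c, hd₂, hc, hbc, -⟩ := exists_next_inl_of_nonBacktracking hadj hnb hb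
  obtain ⟨d₃, a', hd₃, ha', hca', hint⟩ := exists_next_inl_of_nonBacktracking hadj hnb hc
  have hround : s (i + (3 * (t + 1) + 1)) = .inl a := (hper i).trans ha
  -- Unless three threads exactly fill one period, `a` would recur inside a thread.
  rcases lt_trichotomy (d₁ + d₂ + d₃) (3 * (t + 1) + 1) with hlt | heq | hgt
  · obtain ⟨d₄, -, hd₄, -, -, hint'⟩ := exists_next_inl_of_nonBacktracking hadj hnb ha'
    refine absurd ?_ (hint' 1 (by omega) (by omega) a)
    rw [← hround]; congr 1; omega
  · rw [show i + d₁ + d₂ + d₃ = i + (3 * (t + 1) + 1) by omega, hround] at ha'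
    obtain rfl := Sum.inl_injective ha'
    exact ⟨a, b, c, hab, hbc, hca'⟩
  · refine absurd ?_ (hint (3 * (t + 1) + 1 - (d₁ + d₂)) (by omega) (by omega) a)
    rw [← hround]; congr 1; omega

end NonBacktracking

lemma adj_shortThread (ht : 1 ≤ t) (e : G.edgeSet) {m : ℕ} (hm : m ≤ t) :
    (DoubleSubdiv G t).Adj (shortThread t e m) (shortThread t e (m + 1)) := by
  rcases Nat.eq_zero_or_pos m with rfl | hm₀
  · rw [shortThread_zero, shortThread_of_le e le_rfl ht]
    simp
  rw [shortThread_of_le e hm₀ hm]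
  rcases hm.lt_or_eq with hmt | rfl
  · rw [shortThread_of_le e (by omega) hmt]
    simpa using (Nat.sub_add_cancel hm₀).symm
  · rw [shortThread_of_lt e (by omega), adj_comm]
    simp

lemma adj_longThread (e : G.edgeSet) {m : ℕ} (hm : m ≤ t + 1) :
    (DoubleSubdiv G t).Adj (longThread t e m) (longThread t e (m + 1)) := by
  rcases Nat.eq_zero_or_pos m with rfl | hm₀
  · rw [longThread_zero, longThread_of_le e le_rfl (by omega)]
    simp
  rw [longThread_of_le e hm₀ hm]
  rcases hm.lt_or_eq with hmt | rfl
  · rw [longThread_of_le e (by omega) hmt]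
    simpa using (Nat.sub_add_cancel hm₀).symm
  · rw [longThread_of_lt e (by omega), adj_comm]
    simp

variable (t) in
def triangleSeq {a b c : V} (hab : G.Adj a b) (hbc : G.Adj b c) (hac : G.Adj a c) (m : ℕ) :
    V ⊕ (G.edgeSet × (Fin t ⊕ Fin (t + 1))) :=
  if m ≤ t + 1 then shortThread t ⟨s(a, b), hab⟩ m
  else if m ≤ 2 * t + 2 then shortThread t ⟨s(b, c), hbc⟩ (m - (t + 1))
  else longThread t ⟨s(a, c), hac⟩ (3 * (t + 1) + 1 - m)

section Triangle

variable {a b c : V} {hab : G.Adj a b} {hbc : G.Adj b c} {hac : G.Adj a c} {m : ℕ}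

lemma triangleSeq_of_le (hm : m ≤ t + 1) :
    triangleSeq t hab hbc hac m = shortThread t ⟨s(a, b), hab⟩ m :=
  if_pos hm

lemma triangleSeq_of_le_of_le (h₁ : a < b) (h₂ : b < c) (hm₁ : t + 1 ≤ m) (hm₂ : m ≤ 2 * t + 2) :
    triangleSeq t hab hbc hac m = shortThread t ⟨s(b, c), hbc⟩ (m - (t + 1)) := by
  rcases hm₁.eq_or_lt with rfl | hm₁
  · rw [triangleSeq_of_le le_rfl, shortThread_of_lt _ (by omega), Nat.sub_self, shortThread_zero]
    simp [h₁.le, h₂.le]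
  · simp [triangleSeq, hm₂, show ¬ m ≤ t + 1 by omega]

lemma triangleSeq_of_ge (h₁ : a < b) (h₂ : b < c) (hm : 2 * t + 2 ≤ m) :
    triangleSeq t hab hbc hac m = longThread t ⟨s(a, c), hac⟩ (3 * (t + 1) + 1 - m) := by
  rcases hm.eq_or_lt with rfl | hm
  · rw [triangleSeq_of_le_of_le h₁ h₂ (by omega) le_rfl, shortThread_of_lt _ (by omega),
      longThread_of_lt _ (by omega)]
    simp [h₂.le, (h₁.trans h₂).le]
  · simp [triangleSeq, show ¬ m ≤ t + 1 by omega, show ¬ m ≤ 2 * t + 2 by omega]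

lemma adj_triangleSeq (ht : 1 ≤ t) (h₁ : a < b) (h₂ : b < c) (hm : m < 3 * (t + 1) + 1) :
    (DoubleSubdiv G t).Adj (triangleSeq t hab hbc hac m) (triangleSeq t hab hbc hac (m + 1)) := by
  rcases lt_or_ge m (t + 1) with hm₁ | hm₁
  · rw [triangleSeq_of_le (by omega), triangleSeq_of_le (by omega)]
    exact adj_shortThread ht _ (by omega)
  rcases lt_or_ge m (2 * t + 2) with hm₂ | hm₂
  · rw [triangleSeq_of_le_of_le h₁ h₂ hm₁ (by omega),
      triangleSeq_of_le_of_le h₁ h₂ (by omega) (by omega),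
      show m + 1 - (t + 1) = m - (t + 1) + 1 by omega]
    exact adj_shortThread ht _ (by omega)
  · rw [triangleSeq_of_ge h₁ h₂ hm₂, triangleSeq_of_ge h₁ h₂ (by omega),
      show 3 * (t + 1) + 1 - m = 3 * (t + 1) + 1 - (m + 1) + 1 by omega]
    exact (adj_longThread _ (by omega)).symm

lemma triangleSeq_closed (h₁ : a < b) (h₂ : b < c) :
    triangleSeq t hab hbc hac (3 * (t + 1) + 1) = triangleSeq t hab hbc hac 0 := by
  rw [triangleSeq_of_ge h₁ h₂ (by omega), triangleSeq_of_le (by omega), Nat.sub_self,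
    longThread_zero, shortThread_zero]
  simp [h₁.le, (h₁.trans h₂).le]

lemma injOn_triangleSeq (h₁ : a < b) (h₂ : b < c) :
    Set.InjOn (triangleSeq t hab hbc hac) (Set.Iio (3 * (t + 1) + 1)) := by
  have h₃ : a < c := h₁.trans h₂
  have he : (⟨s(b, c), hbc⟩ : G.edgeSet) ≠ ⟨s(a, b), hab⟩ := by
    simp [Subtype.ext_iff, h₂.ne', h₃.ne']
  -- a left inverse: the position of each vertex along the cycle
  refine Set.LeftInvOn.injOn (f₁' := fun x ↦ match x with
    | .inl v => if v = a then 0 else if v = b then t + 1 else 2 * t + 2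
    | .inr (e, .inl i) => if e = ⟨s(a, b), hab⟩ then i + 1 else t + 2 + i
    | .inr (_, .inr j) => 3 * t + 3 - j) fun m hm ↦ ?_
  rw [Set.mem_Iio] at hm
  rcases (by omega : m = 0 ∨ (1 ≤ m ∧ m ≤ t) ∨ m = t + 1 ∨ (t + 2 ≤ m ∧ m ≤ 2 * t + 1) ∨
    m = 2 * t + 2 ∨ 2 * t + 3 ≤ m) with rfl | hm | rfl | hm | rfl | hm
  · rw [triangleSeq_of_le (by omega), shortThread_zero]
    simp [h₁.le]
  · rw [triangleSeq_of_le (by omega), shortThread_of_le _ hm.1 hm.2]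
    simp only [↓reduceIte]
    omega
  · rw [triangleSeq_of_le le_rfl, shortThread_of_lt _ (by omega)]
    simp [h₁.le, h₁.ne']
  · rw [triangleSeq_of_le_of_le h₁ h₂ (by omega) (by omega),
      shortThread_of_le _ (by omega) (by omega)]
    simp only [he, ↓reduceIte]
    omega
  · rw [triangleSeq_of_le_of_le h₁ h₂ (by omega) le_rfl, shortThread_of_lt _ (by omega)]
    simp [h₂.le, h₂.ne', h₃.ne']
  · rw [triangleSeq_of_ge h₁ h₂ (by omega), longThread_of_le _ (by omega) (by omega)]
    dsimp only
    omega

end Triangle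

end DoubleSubdiv

/-- for `t ≥ 2`, `G` contains a triangle iff `G_{t'}` contains a cycle of
length `3(t+1)+1`. -/
theorem stmt4 (G : SimpleGraph V) (t : ℕ) (ht : 2 ≤ t) :
    (∃ a b c : V, G.Adj a b ∧ G.Adj b c ∧ G.Adj c a) ↔
    (∃ (x : V ⊕ (G.edgeSet × (Fin t ⊕ Fin (t + 1)))) (w : (DoubleSubdiv G t).Walk x x),
      w.IsCycle ∧ w.length = 3 * (t + 1) + 1) := by
  rw [← cycleGraph_isContained_iff (by omega)]
  constructor
  · rintro ⟨a, b, c, hab, hbc, hca⟩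
    obtain ⟨x, y, z, hxy, hyz, hxy', hyz', hxz'⟩ := exists_sorted_triangle hab hbc hca
    exact cycleGraph_isContained_of_injOn (s := DoubleSubdiv.triangleSeq t hxy' hyz' hxz')
      (fun m hm ↦ DoubleSubdiv.adj_triangleSeq (by omega) hxy hyz hm)
      (DoubleSubdiv.triangleSeq_closed hxy hyz) (DoubleSubdiv.injOn_triangleSeq hxy hyz)
  · intro h
    obtain ⟨s, hper, hadj, hnb⟩ := exists_periodic_of_cycleGraph_isContained (by omega) h
    exact DoubleSubdiv.exists_triangle_of_periodic (by omega) hper hadj hnb
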